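/- arXiv:1810.07828 — 2 statements merged into one kernel-verified Lean document; each statement's English description precedes it below -/
import Mathlib

section
/- Let f₀ ∈ X be positive and nonzero. Then there exists r > 0, depending only on f₀, and a constant C > 0, depending only on the model parameters (M, M⁻, M⁰, M⁺, v, the K^(l), J^(l), w^(l), K^int, J^int, w^int) and not on f₀, such that for every f in the ball of radius r around f₀ in X, the weight denominators Σ_n w^(l)_n F_n(f) (for all l ∈ {1,…,M⁻}) and Σ_n w^int_n F_n(f) are strictly positive, so that the flux j(f) is well defined, and ‖j(f)‖ ≤ C (β + ‖f₀‖/F(f₀)) ‖f‖. -/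
open MeasureTheory Filter

namespace GBN

structure Params (M : ℕ) where
  hM : 0 < M
  Mm : ℕ
  M0 : ℕ
  Mp : ℕ
  hsum : Mm + M0 + Mp = M
  v : Fin M → ℝ
  hvneg : ∀ σ : Fin M, (σ : ℕ) < Mm → v σ < 0
  hvzero : ∀ σ : Fin M, Mm ≤ (σ : ℕ) → (σ : ℕ) < Mm + M0 → v σ = 0
  hvpos : ∀ σ : Fin M, Mm + M0 ≤ (σ : ℕ) → 0 < v σ
  Kb : Fin M → ℕ
  hKb : ∀ l : Fin M, (l : ℕ) < Mm → 0 < Kb l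
  Jb : Fin M → Fin M → Fin M → ℕ
  hJbdiag : ∀ l σ, Jb l σ σ = 0
  hJbrow : ∀ l : Fin M, (l : ℕ) < Mm → ∀ s : Fin M, (∑ σ : Fin M, Jb l s σ) = Kb l
  wb : Fin M → Fin M → ℝ
  hwb : ∀ l : Fin M, (l : ℕ) < Mm → ∀ σ : Fin M, 0 < wb l σ
  Kint : ℕ
  hKint : 0 < Kint
  Jint : Fin M → Fin M → ℕ
  hJintdiag : ∀ σ, Jint σ σ = 0
  hJintrow : ∀ s : Fin M, (∑ σ : Fin M, Jint s σ) = Kint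
  wint : Fin M → ℝ
  hwint : ∀ σ, 0 < wint σ
  beta : ℝ
  hbeta : 0 ≤ beta

variable {M : ℕ}

/-- The set of species that can undergo boundary events. -/
def bSet (P : Params M) : Finset (Fin M) := Finset.univ.filter fun l => (l : ℕ) < P.Mm

/-- Positivity of an element of X. -/
def Positive (f : Fin M → ℝ → ℝ) : Prop := ∀ σ : Fin M, ∀ x : ℝ, 0 ≤ x → 0 ≤ f σ x

/-- Nonvanishing of an element of X. -/
def Nonzero (f : Fin M → ℝ → ℝ) : Prop := ∃ σ : Fin M, ∃ x : ℝ, 0 ≤ x ∧ f σ x ≠ 0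

/-- Membership in the Banach space X of continuous, integrable (and bounded) functions. -/
def MemX (f : Fin M → ℝ → ℝ) : Prop :=
  (∀ σ, ContinuousOn (f σ) (Set.Ici 0)) ∧
  (∀ σ, IntegrableOn (f σ) (Set.Ici 0)) ∧
  (∀ σ, BddAbove ((fun x => |f σ x|) '' Set.Ici 0))

noncomputable def normL1 (f : Fin M → ℝ → ℝ) : ℝ :=
  ∑ σ : Fin M, ∫ x in Set.Ici (0:ℝ), |f σ x|

noncomputable def normLinf (f : Fin M → ℝ → ℝ) : ℝ :=
  ∑ σ : Fin M, sSup ((fun x => |f σ x|) '' Set.Ici 0)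

/-- The norm of X. -/
noncomputable def normX (f : Fin M → ℝ → ℝ) : ℝ := normL1 f + normLinf f

/-- Pointwise difference. -/
def subf (f g : Fin M → ℝ → ℝ) : Fin M → ℝ → ℝ := fun σ x => f σ x - g σ x

/-- The total number of particles of species σ. -/
noncomputable def Fc (f : Fin M → ℝ → ℝ) (σ : Fin M) : ℝ := ∫ x in Set.Ici (0:ℝ), f σ x

/-- The total number of particles. -/
noncomputable def Ft (f : Fin M → ℝ → ℝ) : ℝ := ∑ σ : Fin M, Fc f σ

/-- The weighted fraction W_σ for a weight vector w. -/
noncomputable def Wgt (w : Fin M → ℝ) (f : Fin M → ℝ → ℝ) (σ : Fin M) : ℝ :=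
  w σ / ∑ n : Fin M, w n * Fc f n

/-- The weighted fraction γ. -/
noncomputable def gam (P : Params M) (f : Fin M → ℝ → ℝ) : ℝ :=
  Ft f / ∑ n : Fin M, P.wint n * Fc f n

/-- The boundary flux rate L̇_l = -v_l f_l(0). -/
noncomputable def Ldot (P : Params M) (f : Fin M → ℝ → ℝ) (l : Fin M) : ℝ := -(P.v l) * f l 0

/-- The flux j(f). -/
noncomputable def flux (P : Params M) (f : Fin M → ℝ → ℝ) (σ : Fin M) (x : ℝ) : ℝ :=
  (∑ s : Fin M, ((∑ l ∈ bSet P, Ldot P f l * (P.Jb l s σ : ℝ) * Wgt (P.wb l) f s)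
      + P.beta * gam P f * (P.Jint s σ : ℝ) * P.wint s) * f s x)
  - ((∑ l ∈ bSet P, Ldot P f l * (P.Kb l : ℝ) * Wgt (P.wb l) f σ)
      + P.beta * gam P f * (P.Kint : ℝ) * P.wint σ) * f σ x

/-- Extension by zero to negative arguments. -/
noncomputable def ext (g : ℝ → ℝ) (x : ℝ) : ℝ := if 0 ≤ x then g x else 0

/-- Continuity in time of a curve with values in X, i.e. membership in C([0,T];X). -/
def ContinuousInX (T : ℝ) (u : ℝ → Fin M → ℝ → ℝ) : Prop :=
  ∀ t ∈ Set.Icc (0:ℝ) T, ∀ ε > (0:ℝ), ∃ δ > (0:ℝ), ∀ s ∈ Set.Icc (0:ℝ) T,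
    |s - t| < δ → normX (subf (u s) (u t)) < ε

/-- A mild solution of the kinetic equations on [0,T]. -/
def MildSolution (P : Params M) (T : ℝ) (u : ℝ → Fin M → ℝ → ℝ) : Prop :=
  (∀ t ∈ Set.Icc (0:ℝ) T, MemX (u t)) ∧
  ContinuousInX T u ∧
  ∀ σ : Fin M, ∀ x : ℝ, 0 ≤ x → ∀ t ∈ Set.Icc (0:ℝ) T,
    u t σ x = ext (u 0 σ) (x - P.v σ * t)
      + ∫ τ in (0:ℝ)..t, ext (flux P (u τ) σ) (x - P.v σ * (t - τ))

/-- Positivity of a curve on [0,T]. -/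
def PositiveOn (T : ℝ) (u : ℝ → Fin M → ℝ → ℝ) : Prop :=
  ∀ t ∈ Set.Icc (0:ℝ) T, Positive (u t)

/-- u is the unique maximal positive mild solution with initial datum f₀,
defined on [0, Tstar). -/
def IsMaximalSolution (P : Params M) (f₀ : Fin M → ℝ → ℝ)
    (Tstar : ENNReal) (u : ℝ → Fin M → ℝ → ℝ) : Prop :=
  0 < Tstar ∧
  (∀ σ : Fin M, ∀ x : ℝ, 0 ≤ x → u 0 σ x = f₀ σ x) ∧
  (∀ T : ℝ, 0 < T → ENNReal.ofReal T < Tstar → MildSolution P T u ∧ PositiveOn T u) ∧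
  (∀ T : ℝ, 0 < T → ∀ g : ℝ → Fin M → ℝ → ℝ,
      MildSolution P T g → PositiveOn T g → (∀ σ : Fin M, ∀ x : ℝ, 0 ≤ x → g 0 σ x = f₀ σ x) →
      ENNReal.ofReal T < Tstar ∧
        ∀ t ∈ Set.Icc (0:ℝ) T, ∀ σ : Fin M, ∀ x : ℝ, 0 ≤ x → g t σ x = u t σ x)

end GBN

/-!
Each total `F_n(f)` moves by at most `‖f - f₀‖`. If `θ` bounds all ratios `w_s / w_n` within the
weight vectors, then on the ball of radius `F(f₀) / (2θ²)` every denominator `∑ₙ wₙ Fₙ(f)` stays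
above `w_s F(f₀) / (2θ)`. Hence `W_s(f) ≤ 2θ / F(f₀)`, `γ(f) w_s = F(f) W_s(f) ≤ 4θ` and
`|L̇_l(f)| ≤ 2 |v_l| ‖f₀‖`, so every coefficient in the flux is at most
`4θ (∑_l |v_l| K^(l) + K^int) (β + ‖f₀‖ / F(f₀))`. The flux is then pointwise dominated by twice
this times `∑_s |f_s(x)|`, and integrating and taking suprema costs a factor `M`.
-/

namespace GBN

lemma exists_ratio_bound {ι κ : Type*} [Finite ι] [Finite κ] (w : ι → κ → ℝ) :
    ∃ θ ≥ (1 : ℝ), ∀ i s n, 0 < w i n → w i s ≤ θ * w i n := by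
  obtain ⟨B, hB⟩ :=
    (Set.finite_range fun p : ι × κ × κ => w p.1 p.2.1 / w p.1 p.2.2).bddAbove
  refine ⟨max B 1, le_max_right _ _, fun i s n hn => ?_⟩
  rw [← div_le_iff₀ hn]
  exact (hB ⟨(i, s, n), rfl⟩).trans (le_max_left _ _)

section FiniteSums

variable {ι : Type*} [Fintype ι]

lemma mul_sub_le_sum_mul {w F F₀ : ι → ℝ} {θ d : ℝ} (hθ : 0 < θ) (hw0 : ∀ n, 0 ≤ w n)
    (hw : ∀ s n, w s ≤ θ * w n) (hF₀ : ∀ n, 0 ≤ F₀ n) (hd : ∑ n, |F n - F₀ n| ≤ d) (s : ι) :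
    w s * ((∑ n, F₀ n) / θ - θ * d) ≤ ∑ n, w n * F n := by
  have hmain : w s / θ * ∑ n, F₀ n ≤ ∑ n, w n * F₀ n := by
    rw [Finset.mul_sum]
    exact Finset.sum_le_sum fun n _ =>
      mul_le_mul_of_nonneg_right ((div_le_iff₀' hθ).2 (hw s n)) (hF₀ n)
  have herr : -(θ * w s * d) ≤ ∑ n, w n * (F n - F₀ n) :=
    calc -(θ * w s * d) ≤ -∑ n, θ * w s * |F n - F₀ n| := by
          rw [← Finset.mul_sum]
          exact neg_le_neg (mul_le_mul_of_nonneg_left hd (mul_nonneg hθ.le (hw0 s)))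
      _ ≤ -∑ n, |w n * (F n - F₀ n)| := by
          refine neg_le_neg (Finset.sum_le_sum fun n _ => ?_)
          rw [abs_mul, abs_of_nonneg (hw0 n)]
          exact mul_le_mul_of_nonneg_right (hw n s) (abs_nonneg _)
      _ ≤ ∑ n, w n * (F n - F₀ n) := neg_le_of_abs_le (Finset.abs_sum_le_sum_abs _ _)
  have hsplit : ∑ n, w n * F n = ∑ n, w n * F₀ n + ∑ n, w n * (F n - F₀ n) := by
    rw [← Finset.sum_add_distrib]
    exact Finset.sum_congr rfl fun n _ => by ring
  have hlhs : w s * ((∑ n, F₀ n) / θ - θ * d) = w s / θ * ∑ n, F₀ n - θ * w s * d := by ring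
  linarith

lemma abs_sum_mul_sub_mul_le {a y : ι → ℝ} {b κ : ℝ} (ha : ∀ s, |a s| ≤ κ) (hb : |b| ≤ κ)
    (σ : ι) : |∑ s, a s * y s - b * y σ| ≤ 2 * κ * ∑ s, |y s| := by
  have hκ : 0 ≤ κ := (abs_nonneg b).trans hb
  have hσ : |y σ| ≤ ∑ s, |y s| :=
    Finset.single_le_sum (f := fun s => |y s|) (fun s _ => abs_nonneg _) (Finset.mem_univ σ)
  calc |∑ s, a s * y s - b * y σ| ≤ |∑ s, a s * y s| + |b * y σ| := abs_sub _ _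
    _ ≤ ∑ s, κ * |y s| + κ * ∑ s, |y s| := by
        refine add_le_add ((Finset.abs_sum_le_sum_abs _ _).trans
          (Finset.sum_le_sum fun s _ => ?_)) ?_
        · rw [abs_mul]
          exact mul_le_mul_of_nonneg_right (ha s) (abs_nonneg _)
        · rw [abs_mul]
          exact mul_le_mul hb hσ (abs_nonneg _) hκ
    _ = 2 * κ * ∑ s, |y s| := by rw [← Finset.mul_sum]; ring

end FiniteSums

lemma integral_Ici_pos {g : ℝ → ℝ} (hc : ContinuousOn g (Set.Ici 0))
    (hi : IntegrableOn g (Set.Ici 0)) (hnn : ∀ x, 0 ≤ x → 0 ≤ g x) {x : ℝ} (hx : 0 ≤ x)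
    (hgx : 0 < g x) : 0 < ∫ y in Set.Ici (0:ℝ), g y := by
  have hsub : Set.Icc x (x + 1) ⊆ Set.Ici 0 := fun y hy => hx.trans hy.1
  have hpos : 0 < ∫ y in x..x + 1, g y :=
    intervalIntegral.integral_pos (by linarith) (hc.mono hsub)
      (fun y hy => hnn y (hsub (Set.Ioc_subset_Icc_self hy)))
      ⟨x, Set.left_mem_Icc.2 (by linarith), hgx⟩
  rw [intervalIntegral.integral_of_le (by linarith)] at hpos
  exact hpos.trans_le (setIntegral_mono_set hi (ae_restrict_of_forall_mem measurableSet_Ici hnn)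
    (Set.Ioc_subset_Icc_self.trans hsub).eventuallyLE)

variable {M : ℕ}

lemma sSup_abs_image_nonneg (g : ℝ → ℝ) : 0 ≤ sSup ((fun x => |g x|) '' Set.Ici 0) :=
  Real.sSup_nonneg (by rintro _ ⟨x, _, rfl⟩; exact abs_nonneg _)

lemma normLinf_nonneg (f : Fin M → ℝ → ℝ) : 0 ≤ normLinf f :=
  Finset.sum_nonneg fun σ _ => sSup_abs_image_nonneg (f σ)

lemma normL1_nonneg (f : Fin M → ℝ → ℝ) : 0 ≤ normL1 f :=
  Finset.sum_nonneg fun _ _ => integral_nonneg fun _ => abs_nonneg _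

lemma normX_nonneg (f : Fin M → ℝ → ℝ) : 0 ≤ normX f :=
  add_nonneg (normL1_nonneg f) (normLinf_nonneg f)

lemma normL1_le_normX (f : Fin M → ℝ → ℝ) : normL1 f ≤ normX f :=
  le_add_of_nonneg_right (normLinf_nonneg f)

lemma abs_apply_le_normX {f : Fin M → ℝ → ℝ}
    (hf : ∀ σ, BddAbove ((fun x => |f σ x|) '' Set.Ici 0)) (σ : Fin M) {x : ℝ} (hx : 0 ≤ x) :
    |f σ x| ≤ normX f :=
  calc |f σ x| ≤ sSup ((fun x => |f σ x|) '' Set.Ici 0) := le_csSup (hf σ) ⟨x, hx, rfl⟩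
    _ ≤ normLinf f := Finset.single_le_sum
        (f := fun σ => sSup ((fun x => |f σ x|) '' Set.Ici 0))
        (fun s _ => sSup_abs_image_nonneg (f s))
        (Finset.mem_univ σ)
    _ ≤ normX f := le_add_of_nonneg_left (normL1_nonneg f)

lemma MemX.bddAbove_subf {f g : Fin M → ℝ → ℝ} (hf : MemX f) (hg : MemX g) (σ : Fin M) :
    BddAbove ((fun x => |subf f g σ x|) '' Set.Ici 0) := by
  obtain ⟨a, ha⟩ := hf.2.2 σ
  obtain ⟨b, hb⟩ := hg.2.2 σ
  refine ⟨a + b, ?_⟩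
  rintro _ ⟨x, hx, rfl⟩
  exact (abs_sub _ _).trans (add_le_add (ha ⟨x, hx, rfl⟩) (hb ⟨x, hx, rfl⟩))

lemma abs_apply_le_two_normX {f f₀ : Fin M → ℝ → ℝ} (hf : MemX f) (hf₀ : MemX f₀)
    (hr : normX (subf f f₀) ≤ normX f₀) (σ : Fin M) {x : ℝ} (hx : 0 ≤ x) :
    |f σ x| ≤ 2 * normX f₀ := by
  have h₀ := abs_apply_le_normX hf₀.2.2 σ hx
  have hsub := abs_apply_le_normX (hf.bddAbove_subf hf₀) σ hx
  have htri : |f σ x| - |f₀ σ x| ≤ |subf f f₀ σ x| := abs_sub_abs_le_abs_sub _ _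
  linarith

lemma Fc_nonneg {f : Fin M → ℝ → ℝ} (hf : Positive f) (σ : Fin M) : 0 ≤ Fc f σ :=
  setIntegral_nonneg measurableSet_Ici fun x hx => hf σ x hx

lemma Ft_pos {f : Fin M → ℝ → ℝ} (hf : MemX f) (hpos : Positive f) (hnz : Nonzero f) :
    0 < Ft f := by
  obtain ⟨σ, x, hx, hfx⟩ := hnz
  have hσ : 0 < Fc f σ :=
    integral_Ici_pos (hf.1 σ) (hf.2.1 σ) (hpos σ) hx ((hpos σ x hx).lt_of_ne' hfx)
  exact hσ.trans_le (Finset.single_le_sum (fun n _ => Fc_nonneg hpos n) (Finset.mem_univ σ))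

lemma Ft_le_normX (f : Fin M → ℝ → ℝ) : Ft f ≤ normX f :=
  (Finset.sum_le_sum fun _ _ => (le_abs_self _).trans abs_integral_le_integral_abs).trans
    (normL1_le_normX f)

lemma sum_abs_Fc_sub_le_normX {f g : Fin M → ℝ → ℝ} (hf : MemX f) (hg : MemX g) :
    ∑ n, |Fc f n - Fc g n| ≤ normX (subf f g) :=
  (Finset.sum_le_sum fun n _ => by
    rw [Fc, Fc, ← integral_sub (hf.2.1 n) (hg.2.1 n)]
    exact abs_integral_le_integral_abs).trans (normL1_le_normX _)

lemma abs_Ft_sub_le (f g : Fin M → ℝ → ℝ) : |Ft f - Ft g| ≤ ∑ n, |Fc f n - Fc g n| := by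
  rw [Ft, Ft, ← Finset.sum_sub_distrib]
  exact Finset.abs_sum_le_sum_abs _ _

lemma normX_le_of_abs_le {f g : Fin M → ℝ → ℝ} {c : ℝ} (hf : MemX f) (hc : 0 ≤ c)
    (h : ∀ σ x, 0 ≤ x → |g σ x| ≤ c * ∑ s, |f s x|) : normX g ≤ M * c * normX f := by
  have hL1 : normL1 g ≤ M * c * normL1 f :=
    calc normL1 g ≤ ∑ _σ : Fin M, c * normL1 f := Finset.sum_le_sum fun σ _ => by
          refine (integral_mono_of_nonneg (ae_of_all _ fun x => abs_nonneg _)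
            ((integrable_finsetSum _ fun s _ => (hf.2.1 s).abs).const_mul c)
            (ae_restrict_of_forall_mem measurableSet_Ici fun x hx => h σ x hx)).trans_eq ?_
          rw [integral_const_mul, integral_finsetSum _ fun s _ => (hf.2.1 s).abs]
          rfl
      _ = M * c * normL1 f := by simp [mul_assoc]
  have hLinf : normLinf g ≤ M * c * normLinf f :=
    calc normLinf g ≤ ∑ _σ : Fin M, c * normLinf f := Finset.sum_le_sum fun σ _ => by
          refine csSup_le ⟨_, 0, Set.self_mem_Ici, rfl⟩ ?_
          rintro _ ⟨x, hx, rfl⟩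
          exact (h σ x hx).trans (mul_le_mul_of_nonneg_left
            (Finset.sum_le_sum fun s _ => le_csSup (hf.2.2 s) ⟨x, hx, rfl⟩) hc)
      _ = M * c * normLinf f := by simp [mul_assoc]
  rw [normX, normX, mul_add]
  exact add_le_add hL1 hLinf

lemma denominator_pos_and_abs_Wgt_le {w : Fin M → ℝ} {θ : ℝ} {f f₀ : Fin M → ℝ → ℝ}
    (hw : ∀ n, 0 < w n) (hθ : 0 < θ) (hwθ : ∀ s n, w s ≤ θ * w n) (hf₀ : ∀ n, 0 ≤ Fc f₀ n)
    (hF₀ : 0 < Ft f₀) (hd : 2 * θ ^ 2 * ∑ n, |Fc f n - Fc f₀ n| ≤ Ft f₀) :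
    0 < ∑ n, w n * Fc f n ∧ ∀ s, |Wgt w f s| ≤ 2 * θ / Ft f₀ := by
  have hgap : Ft f₀ / (2 * θ) ≤ Ft f₀ / θ - θ * ∑ n, |Fc f n - Fc f₀ n| := by
    have : Ft f₀ / θ - θ * ∑ n, |Fc f n - Fc f₀ n| - Ft f₀ / (2 * θ)
        = (Ft f₀ - 2 * θ ^ 2 * ∑ n, |Fc f n - Fc f₀ n|) / (2 * θ) := by
      field_simp
      ring
    linarith [div_nonneg (sub_nonneg.2 hd) (by positivity : (0:ℝ) ≤ 2 * θ)]
  have hlow : ∀ s, w s * (Ft f₀ / (2 * θ)) ≤ ∑ n, w n * Fc f n := fun s =>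
    (mul_le_mul_of_nonneg_left hgap (hw s).le).trans
      (mul_sub_le_sum_mul hθ (fun n => (hw n).le) hwθ hf₀ le_rfl s)
  obtain ⟨s₀, -, -⟩ := Finset.exists_ne_zero_of_sum_ne_zero hF₀.ne'
  have hden : 0 < ∑ n, w n * Fc f n :=
    (mul_pos (hw s₀) (by positivity)).trans_le (hlow s₀)
  refine ⟨hden, fun s => ?_⟩
  rw [Wgt, abs_of_pos (div_pos (hw s) hden)]
  calc w s / ∑ n, w n * Fc f n ≤ w s / (w s * (Ft f₀ / (2 * θ))) :=
        div_le_div_of_nonneg_left (hw s).le (mul_pos (hw s) (by positivity)) (hlow s)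
    _ = 2 * θ / Ft f₀ := by field_simp [(hw s).ne']

lemma gam_mul_wint (P : Params M) (f : Fin M → ℝ → ℝ) (t : Fin M) :
    gam P f * P.wint t = Ft f * Wgt P.wint f t := by
  rw [gam, Wgt]
  ring

-- Parametrised by the stoichiometric weights so that one bound covers both the gain and the
-- loss terms of `flux`.
noncomputable def eventRate (P : Params M) (f : Fin M → ℝ → ℝ) (a : Fin M → ℝ) (b : ℝ)
    (t : Fin M) : ℝ :=
  (∑ l ∈ bSet P, Ldot P f l * a l * Wgt (P.wb l) f t) + P.beta * gam P f * b * P.wint t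

lemma flux_eq_eventRate (P : Params M) (f : Fin M → ℝ → ℝ) (σ : Fin M) (x : ℝ) :
    flux P f σ x = ∑ s, eventRate P f (fun l => P.Jb l s σ) (P.Jint s σ) s * f s x
      - eventRate P f (fun l => P.Kb l) P.Kint σ * f σ x :=
  rfl

lemma abs_eventRate_le (P : Params M) {f : Fin M → ℝ → ℝ} {N ω g b : ℝ} {a : Fin M → ℝ}
    {t : Fin M} (hL : ∀ l ∈ bSet P, |Ldot P f l| ≤ |P.v l| * N)
    (hW : ∀ l ∈ bSet P, |Wgt (P.wb l) f t| ≤ ω) (hg : |gam P f * P.wint t| ≤ g)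
    (ha : ∀ l ∈ bSet P, |a l| ≤ (P.Kb l : ℝ)) (hb : |b| ≤ (P.Kint : ℝ)) :
    |eventRate P f a b t| ≤ (∑ l ∈ bSet P, |P.v l| * P.Kb l) * N * ω + P.beta * P.Kint * g := by
  have hboundary : ∀ l ∈ bSet P,
      |Ldot P f l * a l * Wgt (P.wb l) f t| ≤ |P.v l| * P.Kb l * N * ω := fun l hl => by
    rw [abs_mul, abs_mul]
    calc |Ldot P f l| * |a l| * |Wgt (P.wb l) f t| ≤ |P.v l| * N * P.Kb l * ω :=
          mul_le_mul (mul_le_mul (hL l hl) (ha l hl) (abs_nonneg _)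
            ((abs_nonneg _).trans (hL l hl))) (hW l hl) (abs_nonneg _)
            (mul_nonneg ((abs_nonneg _).trans (hL l hl)) (Nat.cast_nonneg _))
      _ = |P.v l| * P.Kb l * N * ω := by ring
  have hinterior : |P.beta * gam P f * b * P.wint t| ≤ P.beta * P.Kint * g := by
    rw [show P.beta * gam P f * b * P.wint t = P.beta * b * (gam P f * P.wint t) by ring,
      abs_mul, abs_mul, abs_of_nonneg P.hbeta]
    exact mul_le_mul (mul_le_mul_of_nonneg_left hb P.hbeta) hg (abs_nonneg _)
      (mul_nonneg P.hbeta (Nat.cast_nonneg _))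
  rw [eventRate, Finset.sum_mul, Finset.sum_mul]
  exact (abs_add_le _ _).trans (add_le_add
    ((Finset.abs_sum_le_sum_abs _ _).trans (Finset.sum_le_sum hboundary)) hinterior)

lemma normX_flux_le (P : Params M) {f : Fin M → ℝ → ℝ} (hf : MemX f) {κ : ℝ} (hκ : 0 ≤ κ)
    (hrate : ∀ a b t, (∀ l ∈ bSet P, |a l| ≤ (P.Kb l : ℝ)) → |b| ≤ (P.Kint : ℝ) →
      |eventRate P f a b t| ≤ κ) :
    normX (flux P f) ≤ M * (2 * κ) * normX f := by
  have hJb : ∀ l ∈ bSet P, ∀ s σ, |(P.Jb l s σ : ℝ)| ≤ P.Kb l := fun l hl s σ => by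
    rw [Nat.abs_cast, Nat.cast_le, ← P.hJbrow l (Finset.mem_filter.1 hl).2 s]
    exact Finset.single_le_sum (fun _ _ => Nat.zero_le _) (Finset.mem_univ σ)
  have hJint : ∀ s σ, |(P.Jint s σ : ℝ)| ≤ P.Kint := fun s σ => by
    rw [Nat.abs_cast, Nat.cast_le, ← P.hJintrow s]
    exact Finset.single_le_sum (fun _ _ => Nat.zero_le _) (Finset.mem_univ σ)
  refine normX_le_of_abs_le hf (by positivity) fun σ x _ => ?_
  rw [flux_eq_eventRate]
  exact abs_sum_mul_sub_mul_le
    (fun s => hrate _ _ s (fun l hl => hJb l hl s σ) (hJint s σ))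
    (hrate _ _ σ (fun l _ => (Nat.abs_cast _).le) (Nat.abs_cast _).le) σ

lemma denominators_pos_and_abs_eventRate_le (P : Params M) {θ : ℝ} (hθ1 : 1 ≤ θ)
    (hθb : ∀ l ∈ bSet P, ∀ s n, P.wb l s ≤ θ * P.wb l n) (hθi : ∀ s n, P.wint s ≤ θ * P.wint n)
    {f f₀ : Fin M → ℝ → ℝ} (hf : MemX f) (hf₀ : MemX f₀) (hpos : Positive f₀)
    (hF₀ : 0 < Ft f₀) (hr : normX (subf f f₀) < Ft f₀ / (2 * θ ^ 2)) :
    ((∀ l ∈ bSet P, 0 < ∑ n, P.wb l n * Fc f n) ∧ 0 < ∑ n, P.wint n * Fc f n) ∧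
      ∀ a b t, (∀ l ∈ bSet P, |a l| ≤ (P.Kb l : ℝ)) → |b| ≤ (P.Kint : ℝ) →
        |eventRate P f a b t| ≤
          4 * θ * ((∑ l ∈ bSet P, |P.v l| * P.Kb l) + P.Kint) * (P.beta + normX f₀ / Ft f₀) := by
  have hθ0 : 0 < θ := by linarith
  have hΔ := sum_abs_Fc_sub_le_normX hf hf₀
  have hrF : Ft f₀ / (2 * θ ^ 2) ≤ Ft f₀ := div_le_self hF₀.le (by nlinarith)
  have hd : 2 * θ ^ 2 * ∑ n, |Fc f n - Fc f₀ n| ≤ Ft f₀ := by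
    rw [lt_div_iff₀ (by positivity)] at hr
    nlinarith
  have hwb := fun l (hl : l ∈ bSet P) =>
    denominator_pos_and_abs_Wgt_le (P.hwb l (Finset.mem_filter.1 hl).2) hθ0 (hθb l hl)
      (Fc_nonneg hpos) hF₀ hd
  have hwint := denominator_pos_and_abs_Wgt_le P.hwint hθ0 hθi (Fc_nonneg hpos) hF₀ hd
  refine ⟨⟨fun l hl => (hwb l hl).1, hwint.1⟩, fun a b t ha hb => ?_⟩
  have hL : ∀ l, |Ldot P f l| ≤ |P.v l| * (2 * normX f₀) := fun l => by
    rw [Ldot, abs_mul, abs_neg]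
    exact mul_le_mul_of_nonneg_left (abs_apply_le_two_normX hf hf₀
      (by linarith [Ft_le_normX f₀]) l le_rfl) (abs_nonneg _)
  have hFt : |Ft f| ≤ 2 * Ft f₀ := by
    have := abs_sub_abs_le_abs_sub (Ft f) (Ft f₀)
    rw [abs_of_pos hF₀] at this
    linarith [abs_Ft_sub_le f f₀]
  have hg : |gam P f * P.wint t| ≤ 4 * θ := by
    rw [gam_mul_wint, abs_mul]
    calc |Ft f| * |Wgt P.wint f t| ≤ 2 * Ft f₀ * (2 * θ / Ft f₀) :=
          mul_le_mul hFt (hwint.2 t) (abs_nonneg _) (by positivity)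
      _ = 4 * θ := by field_simp; ring
  refine (abs_eventRate_le P (fun l _ => hL l) (fun l hl => (hwb l hl).2 t) hg ha hb).trans ?_
  set V := ∑ l ∈ bSet P, |P.v l| * P.Kb l
  have hV : 0 ≤ V := Finset.sum_nonneg fun l _ => by positivity
  have hA : 0 ≤ normX f₀ / Ft f₀ := div_nonneg (hF₀.le.trans (Ft_le_normX f₀)) hF₀.le
  have hβ := P.hbeta
  have hsplit : V * (2 * normX f₀) * (2 * θ / Ft f₀) + P.beta * P.Kint * (4 * θ)
      = 4 * θ * (V * (normX f₀ / Ft f₀) + P.beta * P.Kint) := by ring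
  have : 0 ≤ 4 * θ * (V * P.beta + P.Kint * (normX f₀ / Ft f₀)) := by positivity
  rw [hsplit]
  nlinarith

/-- Uniform bound on the flux (Lemma B.1): there is a constant C depending only on the
model parameters such that for every positive nonzero f₀ ∈ X there is a radius r > 0 with:
for every f in the ball of radius r around f₀, the weight denominators are positive and
‖j(f)‖ ≤ C (β + ‖f₀‖/F(f₀)) ‖f‖. -/
theorem uniformBound (M : ℕ) (P : Params M) :
    ∃ C > (0:ℝ), ∀ f₀ : Fin M → ℝ → ℝ, MemX f₀ → Positive f₀ → Nonzero f₀ →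
      ∃ r > (0:ℝ), ∀ f : Fin M → ℝ → ℝ, MemX f → normX (subf f f₀) < r →
        ((∀ l ∈ bSet P, 0 < ∑ n : Fin M, P.wb l n * Fc f n) ∧
          0 < ∑ n : Fin M, P.wint n * Fc f n) ∧
        normX (flux P f) ≤ C * (P.beta + normX f₀ / Ft f₀) * normX f := by
  obtain ⟨θ, hθ1, hθ⟩ := exists_ratio_bound fun o : Option (Fin M) => o.elim P.wint P.wb
  set V : ℝ := ∑ l ∈ bSet P, |P.v l| * P.Kb l
  have hV : 0 ≤ V := Finset.sum_nonneg fun l _ => by positivity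
  have hθ0 : 0 < θ := by linarith
  have hM := P.hM
  have hK := P.hKint
  have hβ := P.hbeta
  refine ⟨M * (8 * θ * (V + P.Kint)), by positivity, fun f₀ hf₀ hpos hnz => ?_⟩
  have hF₀ := Ft_pos hf₀ hpos hnz
  have hN : 0 ≤ normX f₀ := normX_nonneg f₀
  refine ⟨Ft f₀ / (2 * θ ^ 2), by positivity, fun f hf hr => ?_⟩
  obtain ⟨hden, hrate⟩ := denominators_pos_and_abs_eventRate_le P hθ1
    (fun l hl s n => hθ (some l) s n (P.hwb l (Finset.mem_filter.1 hl).2 n))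
    (fun s n => hθ none s n (P.hwint n)) hf hf₀ hpos hF₀ hr
  refine ⟨hden, (normX_flux_le P hf (by positivity) hrate).trans_eq ?_⟩
  ring

end GBN
end

section
/- Defect flux identity: let f = (f_2,…,f_M) ∈ X be positive with Σ_k w^(l)_k F_k(f) > 0 for every l ∈ {2,3,4,5} and Σ_k w^(0)_k F_k(f) > 0. Then the grain flux satisfies Σ_{n=2}^M (n − 6) ∫₀^∞ j_n(a) da = − Σ_{n=2}^5 (n − 6)² f_n(0); consequently, for classical solutions of the grain kinetic equations, d/dt Σ_{n=2}^M (n−6) F_n(t) = 0. -/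
open MeasureTheory Filter

namespace Grain

/-- Parameters of the grain kinetic model: maximal number of sides M ≥ 7, nonnegative weight
vectors w^(2), w^(3), w^(4), w^(5), w^(0) on {2,…,M} with the closure conditions, and an
edge-deletion rate β ≥ 0. -/
structure GParams where
  M : ℕ
  hM : 7 ≤ M
  w2 : ℕ → ℝ
  w3 : ℕ → ℝ
  w4 : ℕ → ℝ
  w5 : ℕ → ℝ
  w0 : ℕ → ℝ
  hw2 : ∀ k, 0 ≤ w2 k
  hw3 : ∀ k, 0 ≤ w3 k
  hw4 : ∀ k, 0 ≤ w4 k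
  hw5 : ∀ k, 0 ≤ w5 k
  hw0 : ∀ k, 0 ≤ w0 k
  hc22 : w2 2 = 0
  hc23 : w2 3 = 0
  hc32 : w3 2 = 0
  hc42 : w4 2 = 0
  hc52 : w5 2 = 0
  hc5M : w5 M = 0
  hc02 : w0 2 = 0
  hc0M : w0 M = 0
  beta : ℝ
  hbeta : 0 ≤ beta

/-- Membership in X for the grain model: densities f_n for n ∈ {2,…,M} are continuous,
integrable and bounded on [0,∞), and f_n ≡ 0 for n < 2 or n > M. -/
def GMemX (G : GParams) (f : ℕ → ℝ → ℝ) : Prop :=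
  (∀ n : ℕ, n < 2 ∨ G.M < n → ∀ a : ℝ, f n a = 0) ∧
  (∀ n, ContinuousOn (f n) (Set.Ici 0)) ∧
  (∀ n, IntegrableOn (f n) (Set.Ici 0)) ∧
  (∀ n, BddAbove ((fun a => |f n a|) '' Set.Ici 0))

def GPositive (f : ℕ → ℝ → ℝ) : Prop := ∀ n : ℕ, ∀ a : ℝ, 0 ≤ a → 0 ≤ f n a

def GNonzero (f : ℕ → ℝ → ℝ) : Prop := ∃ n : ℕ, ∃ a : ℝ, 0 ≤ a ∧ f n a ≠ 0

noncomputable def GnormX (G : GParams) (f : ℕ → ℝ → ℝ) : ℝ :=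
  (∑ n ∈ Finset.Icc 2 G.M, ∫ a in Set.Ici (0:ℝ), |f n a|) +
  (∑ n ∈ Finset.Icc 2 G.M, sSup ((fun a => |f n a|) '' Set.Ici 0))

/-- Total number of n-sided grains. -/
noncomputable def GFc (f : ℕ → ℝ → ℝ) (n : ℕ) : ℝ := ∫ a in Set.Ici (0:ℝ), f n a

/-- Total grain number. -/
noncomputable def GFt (G : GParams) (f : ℕ → ℝ → ℝ) : ℝ := ∑ n ∈ Finset.Icc 2 G.M, GFc f n

/-- The weighted fraction W^(l)_n. -/
noncomputable def GW (G : GParams) (w : ℕ → ℝ) (f : ℕ → ℝ → ℝ) (n : ℕ) : ℝ :=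
  w n / ∑ k ∈ Finset.Icc 2 G.M, w k * GFc f k

/-- The weighted fraction γ. -/
noncomputable def Ggam (G : GParams) (f : ℕ → ℝ → ℝ) : ℝ :=
  GFt G f / ∑ k ∈ Finset.Icc 2 G.M, G.w0 k * GFc f k

/-- The flux j_n = h_gr^{n,+} − h_gr^{n,−} + h_ed^{n,+} − h_ed^{n,−} of the grain kinetic
equations. -/
noncomputable def Gflux (G : GParams) (f : ℕ → ℝ → ℝ) (n : ℕ) (a : ℝ) : ℝ :=
  (8 * f 2 0 * GW G G.w2 f (n+2) * f (n+2) a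
    + 9 * f 3 0 * GW G G.w3 f (n+1) * f (n+1) a
    + 4 * f 4 0 * GW G G.w4 f (n+1) * f (n+1) a
    + 2 * f 5 0 * GW G G.w5 f (n+1) * f (n+1) a
    + f 5 0 * GW G G.w5 f (n-1) * f (n-1) a)
  - f n a * (8 * f 2 0 * GW G G.w2 f n + 9 * f 3 0 * GW G G.w3 f n
    + 4 * f 4 0 * GW G G.w4 f n + 3 * f 5 0 * GW G G.w5 f n)
  + 2 * G.beta * Ggam G f * (G.w0 (n-1) * f (n-1) a + G.w0 (n+1) * f (n+1) a)
  - 4 * G.beta * Ggam G f * G.w0 n * f n a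

/-- Extension by zero to negative arguments. -/
noncomputable def ext (g : ℝ → ℝ) (x : ℝ) : ℝ := if 0 ≤ x then g x else 0

/-- Continuity in time with values in X. -/
def GContinuousInX (G : GParams) (T : ℝ) (u : ℝ → ℕ → ℝ → ℝ) : Prop :=
  ∀ t ∈ Set.Icc (0:ℝ) T, ∀ ε > (0:ℝ), ∃ δ > (0:ℝ), ∀ s ∈ Set.Icc (0:ℝ) T,
    |s - t| < δ → GnormX G (fun n a => u s n a - u t n a) < ε

/-- A mild solution of the grain kinetic equations on [0,T]. -/
def GMildSolution (G : GParams) (T : ℝ) (u : ℝ → ℕ → ℝ → ℝ) : Prop :=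
  (∀ t ∈ Set.Icc (0:ℝ) T, GMemX G (u t)) ∧
  GContinuousInX G T u ∧
  ∀ n ∈ Finset.Icc 2 G.M, ∀ a : ℝ, 0 ≤ a → ∀ t ∈ Set.Icc (0:ℝ) T,
    u t n a = ext (u 0 n) (a - ((n:ℝ) - 6) * t)
      + ∫ τ in (0:ℝ)..t, ext (fun y => Gflux G (u τ) n y) (a - ((n:ℝ) - 6) * (t - τ))

def GPositiveOn (T : ℝ) (u : ℝ → ℕ → ℝ → ℝ) : Prop :=
  ∀ t ∈ Set.Icc (0:ℝ) T, GPositive (u t)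

/-- u is the unique maximal positive mild solution of the grain kinetic equations with
initial datum f₀, defined on [0, Tstar). -/
def GIsMaximalSolution (G : GParams) (f₀ : ℕ → ℝ → ℝ)
    (Tstar : ENNReal) (u : ℝ → ℕ → ℝ → ℝ) : Prop :=
  0 < Tstar ∧
  (∀ n : ℕ, ∀ a : ℝ, 0 ≤ a → u 0 n a = f₀ n a) ∧
  (∀ T : ℝ, 0 < T → ENNReal.ofReal T < Tstar → GMildSolution G T u ∧ GPositiveOn T u) ∧
  (∀ T : ℝ, 0 < T → ∀ g : ℝ → ℕ → ℝ → ℝ,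
      GMildSolution G T g → GPositiveOn T g → (∀ n : ℕ, ∀ a : ℝ, 0 ≤ a → g 0 n a = f₀ n a) →
      ENNReal.ofReal T < Tstar ∧
        ∀ t ∈ Set.Icc (0:ℝ) T, ∀ n : ℕ, ∀ a : ℝ, 0 ≤ a → g t n a = u t n a)

/-- The polyhedral defect P = Σ (n−6) F_n. -/
noncomputable def GDefect (G : GParams) (f : ℕ → ℝ → ℝ) : ℝ :=
  ∑ n ∈ Finset.Icc 2 G.M, ((n:ℝ) - 6) * GFc f n

/-- The total area A = Σ ∫ a f_n(a) da. -/
noncomputable def GArea (G : GParams) (f : ℕ → ℝ → ℝ) : ℝ :=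
  ∑ n ∈ Finset.Icc 2 G.M, ∫ a in Set.Ici (0:ℝ), a * f n a

end Grain

/-!
Every event of the model moves grains from one class to a neighbouring one, so each flux `j_n`
is a sum of jumps `c * (g (n + k) - g n)` of weighted profiles `g m = w m * F m`, with
`k ∈ {2, 1, -1}`. Summation by parts turns the `(n - 6)`-moment of such a jump into `-k * ∑ g`,
and the closure conditions on the weights are exactly what keeps the shifted sums inside
`{2, …, M}`. Normalised by the denominators of `W^(l)`, each `∑ g` is `1`: the growth channels
contribute `-2 * 8 f₂(0)`, `-9 f₃(0)`, `-4 f₄(0)` and `(-2 + 1) f₅(0)`, while the two edge-deletion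
jumps cancel.
-/

open Function Finset

theorem support_mul_subset_Icc_add {w v : ℕ → ℝ} {a b k : ℕ} (hv : support v ⊆ Icc a b)
    (hw : ∀ m, a ≤ m → m < a + k → w m = 0) : support (fun m => w m * v m) ⊆ Icc (a + k) b := by
  intro m hm
  rw [support_mul] at hm
  have hm_v := hv hm.2
  simp only [coe_Icc, Set.mem_Icc] at hm_v ⊢
  by_contra hlt
  exact hm.1 (hw m hm_v.1 (by omega))

theorem support_mul_subset_Icc_sub {w v : ℕ → ℝ} {a b : ℕ} (hv : support v ⊆ Icc a b)
    (hw : w b = 0) : support (fun m => w m * v m) ⊆ Icc a (b - 1) := by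
  intro m hm
  rw [support_mul] at hm
  have hm_v := hv hm.2
  simp only [coe_Icc, Set.mem_Icc] at hm_v ⊢
  have hmb : m ≠ b := by rintro rfl; exact hm.1 hw
  omega

theorem sum_Icc_mul_shift_add {a b k : ℕ} {g : ℕ → ℝ} (hg : support g ⊆ Icc (a + k) b) (c : ℝ) :
    ∑ n ∈ Icc a b, ((n : ℝ) - c) * g (n + k) = ∑ n ∈ Icc a b, ((n : ℝ) - k - c) * g n := by
  set F : ℕ → ℝ := fun m => ((m : ℝ) - k - c) * g m
  have hF : support F ⊆ Icc (a + k) b := (support_mul_subset_right _ _).trans hg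
  calc ∑ n ∈ Icc a b, ((n : ℝ) - c) * g (n + k) = ∑ n ∈ Icc a b, F (n + k) := by
        refine sum_congr rfl fun n _ => ?_
        simp only [F]; push_cast; ring
    _ = ∑ m ∈ Icc (a + k) (b + k), F m := by
        rw [← map_add_right_Icc, sum_map]; rfl
    _ = ∑ m ∈ Icc a b, F m := by
        rw [← finsum_eq_sum_of_support_subset F, finsum_eq_sum_of_support_subset F]
        · exact hF.trans (by simp only [coe_Icc]; exact Set.Icc_subset_Icc (by omega) le_rfl)
        · exact hF.trans (by simp only [coe_Icc]; exact Set.Icc_subset_Icc le_rfl (by omega))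

theorem sum_Icc_mul_jump_add {a b k : ℕ} {g : ℕ → ℝ} (hg : support g ⊆ Icc (a + k) b) (c : ℝ) :
    ∑ n ∈ Icc a b, ((n : ℝ) - c) * (g (n + k) - g n) = -k * ∑ n ∈ Icc a b, g n := by
  simp only [mul_sub, sum_sub_distrib]
  rw [sum_Icc_mul_shift_add hg, ← sum_sub_distrib, mul_sum]
  exact sum_congr rfl fun n _ => by ring

theorem sum_Icc_mul_jump_sub {a b : ℕ} {g : ℕ → ℝ} (ha : 1 ≤ a) (hg : support g ⊆ Icc a (b - 1))
    (c : ℝ) : ∑ n ∈ Icc a b, ((n : ℝ) - c) * (g (n - 1) - g n) = ∑ n ∈ Icc a b, g n := by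
  have hshift : support (fun m => g (m - 1)) ⊆ Icc (a + 1) b := fun m hm => by
    have hm_g := hg hm
    simp only [coe_Icc, Set.mem_Icc] at hm_g ⊢
    omega
  have hdown := sum_Icc_mul_shift_add hshift (c - 1)
  simp only [Nat.add_sub_cancel, Nat.cast_one] at hdown
  calc ∑ n ∈ Icc a b, ((n : ℝ) - c) * (g (n - 1) - g n)
      = ∑ n ∈ Icc a b, ((n : ℝ) - 1 - (c - 1)) * g (n - 1)
        - ∑ n ∈ Icc a b, ((n : ℝ) - c) * g n := by
        rw [← sum_sub_distrib]; exact sum_congr rfl fun n _ => by ring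
    _ = ∑ n ∈ Icc a b, g n := by
        rw [← hdown, ← sum_sub_distrib]; exact sum_congr rfl fun n _ => by ring

namespace Grain

def weightedSum (G : GParams) (w v : ℕ → ℝ) : ℝ := ∑ k ∈ Icc 2 G.M, w k * v k

noncomputable def fluxOfProfile (G : GParams) (f : ℕ → ℝ → ℝ) (v : ℕ → ℝ) (n : ℕ) : ℝ :=
  8 * f 2 0 / weightedSum G G.w2 (GFc f) * (G.w2 (n + 2) * v (n + 2) - G.w2 n * v n)
  + 9 * f 3 0 / weightedSum G G.w3 (GFc f) * (G.w3 (n + 1) * v (n + 1) - G.w3 n * v n)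
  + 4 * f 4 0 / weightedSum G G.w4 (GFc f) * (G.w4 (n + 1) * v (n + 1) - G.w4 n * v n)
  + 2 * f 5 0 / weightedSum G G.w5 (GFc f) * (G.w5 (n + 1) * v (n + 1) - G.w5 n * v n)
  + f 5 0 / weightedSum G G.w5 (GFc f) * (G.w5 (n - 1) * v (n - 1) - G.w5 n * v n)
  + 2 * G.beta * Ggam G f * (G.w0 (n + 1) * v (n + 1) - G.w0 n * v n)
  + 2 * G.beta * Ggam G f * (G.w0 (n - 1) * v (n - 1) - G.w0 n * v n)

theorem Gflux_eq_fluxOfProfile (G : GParams) (f : ℕ → ℝ → ℝ) (n : ℕ) (a : ℝ) :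
    Gflux G f n a = fluxOfProfile G f (fun m => f m a) n := by
  simp only [Gflux, fluxOfProfile, GW, weightedSum]
  ring

theorem integral_fluxOfProfile (G : GParams) {f : ℕ → ℝ → ℝ}
    (hf : ∀ m, IntegrableOn (f m) (Set.Ici 0)) (n : ℕ) :
    ∫ a in Set.Ici (0:ℝ), fluxOfProfile G f (fun m => f m a) n = fluxOfProfile G f (GFc f) n := by
  have hf' : ∀ m, Integrable (f m) (volume.restrict (Set.Ici 0)) := hf
  simp (disch := fun_prop) only [fluxOfProfile, integral_add, integral_sub, integral_const_mul]
  rfl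

theorem support_GFc_subset {G : GParams} {f : ℕ → ℝ → ℝ}
    (hf : ∀ n : ℕ, n < 2 ∨ G.M < n → ∀ a : ℝ, f n a = 0) : support (GFc f) ⊆ Icc 2 G.M := by
  intro n hn
  by_contra hout
  simp only [coe_Icc, Set.mem_Icc, not_and_or, not_le] at hout
  exact hn (by simp [GFc, hf n hout])

theorem sum_moment_fluxOfProfile (G : GParams) (f : ℕ → ℝ → ℝ) {v : ℕ → ℝ}
    (hv : support v ⊆ Icc 2 G.M) :
    ∑ n ∈ Icc 2 G.M, ((n : ℝ) - 6) * fluxOfProfile G f v n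
      = -(16 * f 2 0 * (weightedSum G G.w2 v / weightedSum G G.w2 (GFc f))
        + 9 * f 3 0 * (weightedSum G G.w3 v / weightedSum G G.w3 (GFc f))
        + 4 * f 4 0 * (weightedSum G G.w4 v / weightedSum G G.w4 (GFc f))
        + f 5 0 * (weightedSum G G.w5 v / weightedSum G G.w5 (GFc f))) := by
  have vanish_below_three : ∀ {w : ℕ → ℝ}, w 2 = 0 → ∀ m, 2 ≤ m → m < 2 + 1 → w m = 0 := by
    intro w hw m h₁ h₂
    obtain rfl : m = 2 := by omega
    exact hw
  have j2 := sum_Icc_mul_jump_add (support_mul_subset_Icc_add (k := 2) hv fun m h₁ h₂ => by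
    interval_cases m; exacts [G.hc22, G.hc23]) 6
  have j3 := sum_Icc_mul_jump_add (support_mul_subset_Icc_add hv (vanish_below_three G.hc32)) 6
  have j4 := sum_Icc_mul_jump_add (support_mul_subset_Icc_add hv (vanish_below_three G.hc42)) 6
  have j5 := sum_Icc_mul_jump_add (support_mul_subset_Icc_add hv (vanish_below_three G.hc52)) 6
  have j0 := sum_Icc_mul_jump_add (support_mul_subset_Icc_add hv (vanish_below_three G.hc02)) 6
  have d5 := sum_Icc_mul_jump_sub one_le_two (support_mul_subset_Icc_sub hv G.hc5M) 6
  have d0 := sum_Icc_mul_jump_sub one_le_two (support_mul_subset_Icc_sub hv G.hc0M) 6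
  simp only [fluxOfProfile, mul_add, sum_add_distrib, mul_left_comm _ (_ / _),
    mul_left_comm _ (_ * Ggam G f), ← mul_sum]
  simp only [j2, j3, j4, j5, j0, d5, d0, weightedSum, Nat.cast_ofNat, Nat.cast_one]
  ring

theorem defectFluxIdentity_general (G : GParams) (f : ℕ → ℝ → ℝ)
    (hmem : GMemX G f)
    (hd2 : 0 < ∑ k ∈ Finset.Icc 2 G.M, G.w2 k * GFc f k)
    (hd3 : 0 < ∑ k ∈ Finset.Icc 2 G.M, G.w3 k * GFc f k)
    (hd4 : 0 < ∑ k ∈ Finset.Icc 2 G.M, G.w4 k * GFc f k)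
    (hd5 : 0 < ∑ k ∈ Finset.Icc 2 G.M, G.w5 k * GFc f k) :
    ∑ n ∈ Finset.Icc 2 G.M, ((n:ℝ) - 6) * ∫ a in Set.Ici (0:ℝ), Gflux G f n a
      = - ∑ n ∈ Finset.Icc (2:ℕ) 5, ((n:ℝ) - 6)^2 * f n 0 := by
  obtain ⟨hzero, -, hint, -⟩ := hmem
  have normalized : ∀ {w : ℕ → ℝ}, 0 < weightedSum G w (GFc f) →
      weightedSum G w (GFc f) / weightedSum G w (GFc f) = 1 := fun h => div_self h.ne'
  calc ∑ n ∈ Icc 2 G.M, ((n:ℝ) - 6) * ∫ a in Set.Ici (0:ℝ), Gflux G f n a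
      = ∑ n ∈ Icc 2 G.M, ((n:ℝ) - 6) * fluxOfProfile G f (GFc f) n := by
        simp only [Gflux_eq_fluxOfProfile, integral_fluxOfProfile G hint]
    _ = -(16 * f 2 0 + 9 * f 3 0 + 4 * f 4 0 + f 5 0) := by
        rw [sum_moment_fluxOfProfile G f (support_GFc_subset hzero), normalized hd2,
          normalized hd3, normalized hd4, normalized hd5]
        ring
    _ = - ∑ n ∈ Icc (2:ℕ) 5, ((n:ℝ) - 6)^2 * f n 0 := by
        norm_num [sum_Icc_succ_top]

/-- Defect flux identity: for positive f ∈ X with positive weight denominators,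
Σ_{n=2}^M (n−6) ∫₀^∞ j_n(a) da = − Σ_{n=2}^5 (n−6)² f_n(0). -/
theorem defectFluxIdentity (G : GParams) (f : ℕ → ℝ → ℝ)
    (hmem : GMemX G f) (hpos : GPositive f)
    (hd2 : 0 < ∑ k ∈ Finset.Icc 2 G.M, G.w2 k * GFc f k)
    (hd3 : 0 < ∑ k ∈ Finset.Icc 2 G.M, G.w3 k * GFc f k)
    (hd4 : 0 < ∑ k ∈ Finset.Icc 2 G.M, G.w4 k * GFc f k)
    (hd5 : 0 < ∑ k ∈ Finset.Icc 2 G.M, G.w5 k * GFc f k)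
    (hd0 : 0 < ∑ k ∈ Finset.Icc 2 G.M, G.w0 k * GFc f k) :
    ∑ n ∈ Finset.Icc 2 G.M, ((n:ℝ) - 6) * ∫ a in Set.Ici (0:ℝ), Gflux G f n a
      = - ∑ n ∈ Finset.Icc (2:ℕ) 5, ((n:ℝ) - 6)^2 * f n 0 :=
  defectFluxIdentity_general G f hmem hd2 hd3 hd4 hd5

end Grain
end
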